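/- arXiv:2410.09351 — 2 statements merged into one kernel-verified Lean document; each statement's English description precedes it below -/
import Mathlib

section
/- Let Ω ⊂ ℝ⁴ be a measurable set of finite measure, μ < 0, λ ∈ ℝ, and let u : Ω → ℝ be measurable with u², u² ln u² integrable and ∇u ∈ L². Then I(u) - (1/4)Q(u) ≥ (μ/4) e^{1-λ/μ} |Ω|, where I(u) - (1/4)Q(u) = (1/4)‖∇u‖₂² - (λ/4)‖u‖₂² + (μ/2)‖u‖₂² - (μ/4)∫_Ω u² ln u² dx and Q(u) = ⟨I'(u),u⟩. In particular, any critical point u of I satisfies I(u) ≥ (μ/4) e^{1-λ/μ} |Ω|. -/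
/-! The integrand `-(λ/4) t + (μ/2) t - (μ/4) t log t` of the `u`-terms, with `t = u²`, equals
`(μ/4) · t (2 - λ/μ - log t)`. The function `t ↦ t (c - log t)` is maximal at `t = exp (c - 1)`,
with maximum `exp (c - 1)`, so since `μ < 0` the integrand is at least `(μ/4) e^{1-λ/μ}` everywhere.
Integrating over `Ω` and dropping the nonnegative gradient term gives the bound. -/

open MeasureTheory Real

lemma Real.mul_sub_log_le_exp_sub_one (c : ℝ) {t : ℝ} (ht : 0 ≤ t) :
    t * (c - log t) ≤ exp (c - 1) := by
  rcases ht.eq_or_lt with rfl | ht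
  · simpa using (exp_pos _).le
  have hlog : log (exp (c - 1) / t) ≤ exp (c - 1) / t - 1 :=
    log_le_sub_one_of_pos (div_pos (exp_pos _) ht)
  rw [log_div (exp_pos _).ne' ht.ne', log_exp] at hlog
  calc t * (c - log t) = t * ((c - 1 - log t) + 1) := by ring
    _ ≤ t * ((exp (c - 1) / t - 1) + 1) := by gcongr
    _ = exp (c - 1) := by rw [sub_add_cancel, mul_div_cancel₀ _ ht.ne']

lemma exp_le_logarithmic_density {μ : ℝ} (hμ : μ < 0) (lam : ℝ) {t : ℝ} (ht : 0 ≤ t) :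
    (μ / 4) * exp (1 - lam / μ) ≤
      -(lam / 4) * t + (μ / 2) * t - (μ / 4) * (t * log t) := by
  have hmax : t * ((2 - lam / μ) - log t) ≤ exp (1 - lam / μ) := by
    simpa only [show 2 - lam / μ - 1 = 1 - lam / μ by ring] using
      Real.mul_sub_log_le_exp_sub_one (2 - lam / μ) ht
  calc (μ / 4) * exp (1 - lam / μ)
      ≤ (μ / 4) * (t * ((2 - lam / μ) - log t)) :=
        mul_le_mul_of_nonpos_left hmax (by linarith)
    _ = -(lam / 4) * t + (μ / 2) * t - (μ / 4) * (t * log t) := by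
        field_simp [hμ.ne]
        ring

theorem stmt_10_general (Ω : Set (EuclideanSpace ℝ (Fin 4)))
    (hfin : volume Ω < ⊤) (μ lam : ℝ) (hμ : μ < 0)
    (u : EuclideanSpace ℝ (Fin 4) → ℝ)
    (hint1 : IntegrableOn (fun x => (u x) ^ 2) Ω)
    (hint2 : IntegrableOn (fun x => (u x) ^ 2 * Real.log ((u x) ^ 2)) Ω) :
    (1 / 4) * (∫ x in Ω, ‖fderiv ℝ u x‖ ^ 2)
      - (lam / 4) * (∫ x in Ω, (u x) ^ 2)
      + (μ / 2) * (∫ x in Ω, (u x) ^ 2)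
      - (μ / 4) * (∫ x in Ω, (u x) ^ 2 * Real.log ((u x) ^ 2))
      ≥ (μ / 4) * Real.exp (1 - lam / μ) * (volume Ω).toReal := by
  have hgrad : 0 ≤ ∫ x in Ω, ‖fderiv ℝ u x‖ ^ 2 := integral_nonneg fun x => by positivity
  have hsq : IntegrableOn (fun x => -(lam / 4) * (u x) ^ 2 + (μ / 2) * (u x) ^ 2) Ω :=
    (hint1.const_mul _).add (hint1.const_mul _)
  have hdensity :
      (μ / 4) * exp (1 - lam / μ) * (volume Ω).toReal ≤ ∫ x in Ω,
        (-(lam / 4) * (u x) ^ 2 + (μ / 2) * (u x) ^ 2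
          - (μ / 4) * ((u x) ^ 2 * log ((u x) ^ 2))) := by
    rw [← measureReal_def, mul_comm, ← smul_eq_mul, ← setIntegral_const]
    exact integral_mono (integrableOn_const hfin.ne) (hsq.sub (hint2.const_mul _))
      fun x => exp_le_logarithmic_density hμ lam (sq_nonneg (u x))
  rw [integral_sub hsq (hint2.const_mul _), integral_add (hint1.const_mul _) (hint1.const_mul _),
    integral_const_mul, integral_const_mul, integral_const_mul] at hdensity
  linarith

theorem stmt_10 (Ω : Set (EuclideanSpace ℝ (Fin 4))) (hΩ : MeasurableSet Ω)
    (hfin : volume Ω < ⊤) (μ lam : ℝ) (hμ : μ < 0)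
    (u : EuclideanSpace ℝ (Fin 4) → ℝ) (hmeas : Measurable u)
    (hint1 : IntegrableOn (fun x => (u x) ^ 2) Ω)
    (hint2 : IntegrableOn (fun x => (u x) ^ 2 * Real.log ((u x) ^ 2)) Ω)
    (hint3 : IntegrableOn (fun x => ‖fderiv ℝ u x‖ ^ 2) Ω) :
    (1 / 4) * (∫ x in Ω, ‖fderiv ℝ u x‖ ^ 2)
      - (lam / 4) * (∫ x in Ω, (u x) ^ 2)
      + (μ / 2) * (∫ x in Ω, (u x) ^ 2)
      - (μ / 4) * (∫ x in Ω, (u x) ^ 2 * Real.log ((u x) ^ 2))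
      ≥ (μ / 4) * Real.exp (1 - lam / μ) * (volume Ω).toReal :=
  stmt_10_general Ω hfin μ lam hμ u hint1 hint2
end

section
/- Let p ∈ (1, ∞), Ω a measure space, and (u_n) a bounded sequence in L^p(Ω) with u_n → u almost everywhere. Then lim_{n→∞} (‖u_n‖_p^p - ‖u_n - u‖_p^p) = ‖u‖_p^p. -/
open MeasureTheory Filter Topology

/-!
For every `ε > 0` there is `C_ε` with `||a + b|^p - |a|^p| ≤ ε |a|^p + C_ε |b|^p`: near `b = 0` this is
continuity of `t ↦ |1 + t|^p` at `0` after scaling by `a`, and otherwise both terms are `O(|b|^p)`.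
With `a = uₙ - u` and `b = u` it bounds `|uₙ|^p - |uₙ - u|^p` by `ε |uₙ - u|^p + C_ε |u|^p`. Since
`∫ |uₙ - u|^p` is bounded and `|u|^p` is integrable by Fatou's lemma, dominated convergence applies to
the positive part of `||uₙ|^p - |uₙ - u|^p - |u|^p| - ε |uₙ - u|^p`, so the limit holds up to `O(ε)`.
-/

theorem abs_abs_add_rpow_sub_le {p : ℝ} (hp : 0 < p) {ε : ℝ} (hε : 0 < ε) :
    ∃ C, ∀ a b : ℝ, |(|a + b| ^ p - |a| ^ p)| ≤ ε * |a| ^ p + C * |b| ^ p := by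
  have hcont : ContinuousAt (fun t : ℝ => |1 + t| ^ p) 0 := by fun_prop (disch := positivity)
  obtain ⟨δ, hδ, hδε⟩ := Metric.continuousAt_iff.1 hcont ε hε
  refine ⟨(1 + δ⁻¹) ^ p, fun a b => ?_⟩
  have hb : 0 ≤ (1 + δ⁻¹) ^ p * |b| ^ p := by positivity
  rcases lt_or_ge |b| (δ * |a|) with hsmall | hlarge
  · have ha : a ≠ 0 := by rintro rfl; simp at hsmall; linarith [abs_nonneg b]
    have hba : dist (b / a) 0 < δ := by
      rwa [dist_zero_right, Real.norm_eq_abs, abs_div, div_lt_iff₀ (abs_pos.2 ha)]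
    have hsplit : |a + b| ^ p = |a| ^ p * |1 + b / a| ^ p := by
      rw [← Real.mul_rpow (abs_nonneg _) (abs_nonneg _), ← abs_mul, mul_add, mul_one,
        mul_div_cancel₀ _ ha]
    have hnear := hδε hba
    simp only [add_zero, abs_one, Real.one_rpow, Real.dist_eq] at hnear
    rw [hsplit, ← mul_sub_one, abs_mul, abs_of_nonneg (by positivity)]
    nlinarith [Real.rpow_nonneg (abs_nonneg a) p]
  · have ha : |a| ≤ δ⁻¹ * |b| := by rw [inv_mul_eq_div, le_div_iff₀ hδ]; linarith
    have hab : |a + b| ≤ (1 + δ⁻¹) * |b| := by linarith [abs_add_le a b]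
    have hbound : ∀ t : ℝ, 0 ≤ t → t ≤ (1 + δ⁻¹) * |b| → t ^ p ≤ (1 + δ⁻¹) ^ p * |b| ^ p :=
      fun t ht htb => (Real.rpow_le_rpow ht htb hp.le).trans_eq
        (Real.mul_rpow (by positivity) (abs_nonneg b))
    have hdiff := abs_sub_le_of_nonneg_of_le (by positivity) (hbound _ (abs_nonneg _) hab)
      (by positivity) (hbound _ (abs_nonneg _) (ha.trans (by nlinarith [abs_nonneg b])))
    nlinarith [Real.rpow_nonneg (abs_nonneg a) p]

theorem exists_abs_add_rpow_le {p : ℝ} (hp : 0 < p) :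
    ∃ C, ∀ a b : ℝ, |a + b| ^ p ≤ 2 * |a| ^ p + C * |b| ^ p := by
  obtain ⟨C, hC⟩ := abs_abs_add_rpow_sub_le hp one_pos
  exact ⟨C, fun a b => by linarith [le_abs_self (|a + b| ^ p - |a| ^ p), hC a b]⟩

theorem tendsto_of_forall_abs_sub_le_add_mul {ι : Type*} {l : Filter ι} {u : ι → ℝ} {a M : ℝ}
    (h : ∀ ε > 0, ∃ v : ι → ℝ, Tendsto v l (𝓝 0) ∧ ∀ i, |u i - a| ≤ v i + ε * M) :
    Tendsto u l (𝓝 a) := by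
  rw [Metric.tendsto_nhds]
  intro δ hδ
  obtain ⟨v, hv, huv⟩ := h (δ / (2 * (|M| + 1))) (by positivity)
  have hM : δ / (2 * (|M| + 1)) * M < δ / 2 := by
    rw [div_mul_eq_mul_div, div_lt_div_iff₀ (by positivity) two_pos]
    nlinarith [le_abs_self M]
  filter_upwards [hv.eventually (gt_mem_nhds (half_pos hδ))] with i hi
  rw [Real.dist_eq]
  linarith [huv i]

section Integral

variable {α : Type*} [MeasurableSpace α] {ν : Measure α}

theorem integrable_of_tendsto_ae_of_integral_norm_le {E : Type*} [NormedAddCommGroup E]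
    {F : ℕ → α → E} {G : α → E} {C : ℝ} (hF : ∀ n, Integrable (F n) ν)
    (hC : ∀ n, ∫ x, ‖F n x‖ ∂ν ≤ C) (hlim : ∀ᵐ x ∂ν, Tendsto (fun n => F n x) atTop (𝓝 (G x))) :
    Integrable G ν := by
  refine ⟨aestronglyMeasurable_of_tendsto_ae _ (fun n => (hF n).1) hlim, ?_⟩
  calc ∫⁻ x, ‖G x‖ₑ ∂ν = ∫⁻ x, liminf (fun n => ‖F n x‖ₑ) atTop ∂ν :=
        lintegral_congr_ae (by filter_upwards [hlim] with x hx using hx.enorm.liminf_eq.symm)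
    _ ≤ liminf (fun n => ∫⁻ x, ‖F n x‖ₑ ∂ν) atTop :=
        lintegral_liminf_le' fun n => (hF n).1.enorm
    _ ≤ ENNReal.ofReal C := liminf_le_of_frequently_le' <| Frequently.of_forall fun n => by
        rw [← ofReal_integral_norm_eq_lintegral_enorm (hF n)]
        exact ENNReal.ofReal_le_ofReal (hC n)
    _ < ⊤ := ENNReal.ofReal_lt_top

theorem tendsto_integral_of_forall_abs_le_mul_add {H D : ℕ → α → ℝ} {G : α → ℝ} {M : ℝ}
    (hH : ∀ n, Integrable (H n) ν) (hD : ∀ n, Integrable (D n) ν) (hG : Integrable G ν)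
    (hD0 : ∀ n x, 0 ≤ D n x) (hDM : ∀ n, ∫ x, D n x ∂ν ≤ M)
    (hlim : ∀ᵐ x ∂ν, Tendsto (fun n => H n x) atTop (𝓝 (G x)))
    (hdom : ∀ ε > 0, ∃ C, ∀ n x, |H n x| ≤ ε * D n x + C * |G x|) :
    Tendsto (fun n => ∫ x, H n x ∂ν) atTop (𝓝 (∫ x, G x ∂ν)) := by
  refine tendsto_of_forall_abs_sub_le_add_mul (M := M) fun ε hε => ?_
  obtain ⟨C, hC⟩ := hdom ε hε
  set W : ℕ → α → ℝ := fun n x => max (|H n x - G x| - ε * D n x) 0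
  have hW_int : ∀ n, Integrable (W n) ν := fun n =>
    (((hH n).sub hG).abs.sub ((hD n).const_mul ε)).pos_part
  have hW_le : ∀ n x, ‖W n x‖ ≤ (|C| + 1) * |G x| := fun n x => by
    rw [Real.norm_eq_abs, abs_of_nonneg (le_max_right _ _)]
    refine max_le ?_ (by positivity)
    nlinarith [abs_sub (H n x) (G x), hC n x, le_abs_self C, abs_nonneg (G x)]
  have hW_lim : ∀ᵐ x ∂ν, Tendsto (fun n => W n x) atTop (𝓝 0) := by
    filter_upwards [hlim] with x hx
    have h0 : Tendsto (fun n => |H n x - G x|) atTop (𝓝 0) := by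
      simpa using (hx.sub_const (G x)).abs
    refine squeeze_zero (fun n => le_max_right _ _) (fun n => max_le ?_ (abs_nonneg _)) h0
    linarith [mul_nonneg hε.le (hD0 n x)]
  refine ⟨fun n => ∫ x, W n x ∂ν, by
    simpa using tendsto_integral_of_dominated_convergence _ (fun n => (hW_int n).1)
      (hG.abs.const_mul (|C| + 1)) (fun n => ae_of_all _ (hW_le n)) hW_lim, fun n => ?_⟩
  rw [← integral_sub (hH n) hG]
  calc |∫ x, H n x - G x ∂ν| ≤ ∫ x, |H n x - G x| ∂ν := abs_integral_le_integral_abs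
    _ ≤ ∫ x, W n x + ε * D n x ∂ν :=
        integral_mono ((hH n).sub hG).abs ((hW_int n).add ((hD n).const_mul ε)) fun x => by
          linarith [le_max_left (|H n x - G x| - ε * D n x) 0]
    _ = ∫ x, W n x ∂ν + ε * ∫ x, D n x ∂ν := by
        rw [integral_add (hW_int n) ((hD n).const_mul ε), integral_const_mul]
    _ ≤ ∫ x, W n x ∂ν + ε * M := by gcongr; exact hDM n

end Integral

theorem stmt_18_general {α : Type*} [MeasurableSpace α] (ν : Measure α) (p : ℝ) (hp : 1 < p)
    (f : ℕ → α → ℝ) (g : α → ℝ)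
    (hmeas : ∀ n, AEStronglyMeasurable (f n) ν)
    (hint : ∀ n, Integrable (fun x => |f n x| ^ p) ν)
    (hbdd : ∃ C : ℝ, ∀ n, (∫ x, |f n x| ^ p ∂ν) ≤ C)
    (hae : ∀ᵐ x ∂ν, Tendsto (fun n => f n x) atTop (𝓝 (g x))) :
    Tendsto (fun n => (∫ x, |f n x| ^ p ∂ν) - ∫ x, |f n x - g x| ^ p ∂ν)
      atTop (𝓝 (∫ x, |g x| ^ p ∂ν)) := by
  have hp0 : 0 < p := one_pos.trans hp
  have hcont : Continuous fun t : ℝ => |t| ^ p := by fun_prop (disch := positivity)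
  obtain ⟨C₀, hC₀⟩ := hbdd
  have hg : Integrable (fun x => |g x| ^ p) ν :=
    integrable_of_tendsto_ae_of_integral_norm_le hint
      (fun n => by simpa [abs_of_nonneg (Real.rpow_nonneg (abs_nonneg _) p)] using hC₀ n)
      (by filter_upwards [hae] with x hx using (hcont.tendsto _).comp hx)
  obtain ⟨C₁, hC₁⟩ := exists_abs_add_rpow_le hp0
  have hmaj : ∀ n, Integrable (fun x => 2 * |f n x| ^ p + C₁ * |g x| ^ p) ν := fun n =>
    ((hint n).const_mul 2).add (hg.const_mul C₁)
  have hdiff_le : ∀ n x, |f n x - g x| ^ p ≤ 2 * |f n x| ^ p + C₁ * |g x| ^ p := fun n x => by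
    simpa [← sub_eq_add_neg] using hC₁ (f n x) (-g x)
  have hdiff : ∀ n, Integrable (fun x => |f n x - g x| ^ p) ν := fun n =>
    (hmaj n).mono' (hcont.comp_aestronglyMeasurable
        ((hmeas n).sub (aestronglyMeasurable_of_tendsto_ae _ hmeas hae)))
      (ae_of_all _ fun x => by
        simpa [abs_of_nonneg (Real.rpow_nonneg (abs_nonneg _) p)] using hdiff_le n x)
  have hdiff_bdd : ∀ n, ∫ x, |f n x - g x| ^ p ∂ν ≤ 2 * C₀ + C₁ * ∫ x, |g x| ^ p ∂ν := fun n => by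
    refine (integral_mono (hdiff n) (hmaj n) (hdiff_le n)).trans ?_
    rw [integral_add ((hint n).const_mul 2) (hg.const_mul C₁), integral_const_mul,
      integral_const_mul]
    linarith [hC₀ n]
  refine (tendsto_integral_of_forall_abs_le_mul_add (fun n => (hint n).sub (hdiff n)) hdiff hg
    (fun n x => by positivity) hdiff_bdd ?_ ?_).congr fun n => integral_sub (hint n) (hdiff n)
  · filter_upwards [hae] with x hx
    have hsub : Tendsto (fun n => f n x - g x) atTop (𝓝 0) := by simpa using hx.sub_const (g x)
    simpa [Real.zero_rpow hp0.ne'] using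
      ((hcont.tendsto _).comp hx).sub ((hcont.tendsto _).comp hsub)
  · intro ε hε
    obtain ⟨C, hC⟩ := abs_abs_add_rpow_sub_le hp0 hε
    refine ⟨C, fun n x => ?_⟩
    simpa [abs_of_nonneg (Real.rpow_nonneg (abs_nonneg _) p)] using hC (f n x - g x) (g x)

theorem stmt_18 {α : Type*} [MeasurableSpace α] (ν : Measure α) (p : ℝ) (hp : 1 < p)
    (f : ℕ → α → ℝ) (g : α → ℝ)
    (hmeas : ∀ n, AEStronglyMeasurable (f n) ν) (hgmeas : AEStronglyMeasurable g ν)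
    (hint : ∀ n, Integrable (fun x => |f n x| ^ p) ν)
    (hbdd : ∃ C : ℝ, ∀ n, (∫ x, |f n x| ^ p ∂ν) ≤ C)
    (hae : ∀ᵐ x ∂ν, Tendsto (fun n => f n x) atTop (𝓝 (g x))) :
    Tendsto (fun n => (∫ x, |f n x| ^ p ∂ν) - ∫ x, |f n x - g x| ^ p ∂ν)
      atTop (𝓝 (∫ x, |g x| ^ p ∂ν)) :=
  stmt_18_general ν p hp f g hmeas hint hbdd hae
end
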